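/- arXiv:2408.13083 — 2 statements merged into one kernel-verified Lean document; each statement's English description precedes it below -/
import Mathlib

section
/- Let ν ≥ 2 be an integer, k ∈ ℕ, and v ∈ 𝔻. Then (ν−1) · ∫_{𝔻} |v − w|^{2k} (1−|w|²)^ν dι(w) = ∑_{i=0}^{k} C(k,i)² · (i!/(ν)_i) · |v|^{2(k−i)}, where C(k,i) is the binomial coefficient. -/
open MeasureTheory Complex Filter

/-- The open unit disk in `ℂ`. -/
def unitDisk : Set ℂ := {z : ℂ | ‖z‖ < 1}

/-- The `SU(1,1)`-invariant measure `ι` on the unit disk, `dι(z) = dA(z)/(π(1−|z|²)²)`. -/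
noncomputable def iota : Measure ℂ :=
  (volume.restrict unitDisk).withDensity
    (fun z => ENNReal.ofReal (1 / (Real.pi * (1 - ‖z‖ ^ 2) ^ 2)))

instance : SigmaFinite iota := SigmaFinite.withDensity_ofReal _

/-- The Pochhammer symbol `(a)_n = a(a+1)⋯(a+n-1)` for a real number `a`. -/
noncomputable def poch (a : ℝ) (n : ℕ) : ℝ := ∏ i ∈ Finset.range n, (a + i)

/-!
Expanding `(w - v)^k` binomially writes `‖w - v‖^(2k)` as `|P(w)|²` for the polynomial
`P(w) = ∑ₘ C(k,m) (-v)^(k-m) wᵐ`. In polar coordinates the angular integral shows that the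
monomials `wᵐ` are orthogonal in `L²(𝔻, (1 - |w|²)^(ν-2) dA)`, and the radial integral, after
`t = r²`, is the Beta integral `‖wᵐ‖² = π B(m+1, ν-1) = π m! / (ν-1)_{m+1}`. Parseval's identity
then gives the sum, since `(ν-1)_{m+1} = (ν-1) (ν)_m`.
-/

open scoped ComplexConjugate Nat

lemma isOpen_unitDisk : IsOpen unitDisk :=
  isOpen_lt continuous_norm continuous_const

lemma integral_iota_eq_setIntegral (f : ℂ → ℝ) :
    ∫ w, f w ∂iota = ∫ w in unitDisk, f w / (Real.pi * (1 - ‖w‖ ^ 2) ^ 2) := by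
  have hmeas : Measurable fun z : ℂ => ENNReal.ofReal (1 / (Real.pi * (1 - ‖z‖ ^ 2) ^ 2)) := by
    fun_prop
  rw [iota, integral_withDensity_eq_integral_toReal_smul hmeas
    (ae_of_all _ fun _ => ENNReal.ofReal_lt_top)]
  refine setIntegral_congr_fun isOpen_unitDisk.measurableSet fun w _ => ?_
  rw [ENNReal.toReal_ofReal (by positivity), smul_eq_mul, one_div_mul_eq_div]

lemma integral_pow_mul_one_sub_pow (m p : ℕ) :
    ∫ t in (0 : ℝ)..1, t ^ m * (1 - t) ^ p = m ! / poch (p + 1) (m + 1) := by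
  have hβ := betaIntegral_eval_nat_add_one_right (u := (p : ℂ) + 1)
    (by simp only [add_re, natCast_re, one_re]; positivity) m
  rw [← betaIntegral_symm, betaIntegral] at hβ
  simp only [add_sub_cancel_right, cpow_natCast] at hβ
  apply ofReal_injective
  rw [← intervalIntegral.integral_ofReal, poch]
  push_cast
  exact hβ

lemma integral_pow_mul_one_sub_sq_pow (m p : ℕ) :
    ∫ r in (0 : ℝ)..1, r ^ (2 * m + 1) * (1 - r ^ 2) ^ p =
      (∫ t in (0 : ℝ)..1, t ^ m * (1 - t) ^ p) / 2 := by
  have hsubst := intervalIntegral.integral_comp_mul_deriv (a := 0) (b := 1)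
    (f := fun r => r ^ 2) (f' := fun r => 2 * r) (g := fun t => t ^ m * (1 - t) ^ p)
    (fun r _ => by simpa using hasDerivAt_pow 2 r) (by fun_prop) (by fun_prop)
  have hintegrand : ∀ r : ℝ, (r ^ 2) ^ m * (1 - r ^ 2) ^ p * (2 * r) =
      2 * (r ^ (2 * m + 1) * (1 - r ^ 2) ^ p) := fun r => by ring
  simp only [Function.comp, hintegrand, intervalIntegral.integral_const_mul] at hsubst
  rw [one_pow, zero_pow two_ne_zero] at hsubst
  linarith

lemma integral_exp_int_mul_I (d : ℤ) :
    ∫ θ in Set.Ioo (-Real.pi) Real.pi, exp (d * θ * I) =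
      if d = 0 then 2 * (Real.pi : ℂ) else 0 := by
  rw [← integral_Ioc_eq_integral_Ioo, ← intervalIntegral.integral_of_le (by linarith [Real.pi_pos])]
  split_ifs with hd
  · simp only [hd, Int.cast_zero, zero_mul, exp_zero, intervalIntegral.integral_const,
      sub_neg_eq_add, real_smul, ofReal_add, mul_one]
    ring
  · have hdI : (d : ℂ) * I ≠ 0 := by simp [hd, I_ne_zero]
    have hperiod : exp (d * I * Real.pi) = exp (d * I * ↑(-Real.pi)) :=
      exp_eq_exp_iff_exists_int.mpr ⟨d, by push_cast; ring⟩
    simp_rw [mul_right_comm _ _ I]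
    rw [integral_exp_mul_complex hdI, hperiod, sub_self, zero_div]

lemma polarCoord_symm_eq (p : ℝ × ℝ) : Complex.polarCoord.symm p = p.1 * exp (p.2 * I) := by
  rw [Complex.polarCoord_symm_apply, exp_mul_I, ← ofReal_cos, ← ofReal_sin]

lemma pow_mul_conj_pow_polarCoord_symm (m n : ℕ) (r θ : ℝ) :
    Complex.polarCoord.symm (r, θ) ^ m * conj (Complex.polarCoord.symm (r, θ)) ^ n =
      (r : ℂ) ^ (m + n) * exp (((m - n : ℤ) : ℂ) * θ * I) := by
  rw [polarCoord_symm_eq, map_mul, conj_ofReal, ← exp_conj, map_mul, conj_ofReal, conj_I,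
    mul_pow, mul_pow, ← exp_nat_mul, ← exp_nat_mul, pow_add]
  have hexp : exp (m * (θ * I)) * exp (n * (θ * -I)) = exp (((m - n : ℤ) : ℂ) * θ * I) := by
    rw [← exp_add]; push_cast; ring_nf
  rw [← hexp]
  ring

lemma setIntegral_unitDisk_pow_mul_conj_pow (m n p : ℕ) :
    ∫ w in unitDisk, w ^ m * conj w ^ n * ((1 - ‖w‖ ^ 2 : ℝ) : ℂ) ^ p =
      if m = n then Real.pi * ((∫ t in (0 : ℝ)..1, t ^ m * (1 - t) ^ p : ℝ) : ℂ) else 0 := by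
  set G : ℝ → ℂ := (Set.Ioo 0 1).indicator fun r => ((r ^ (m + n + 1) * (1 - r ^ 2) ^ p : ℝ) : ℂ)
  set H : ℝ → ℂ := fun θ => exp (((m - n : ℤ) : ℂ) * θ * I)
  have hpolar : Set.EqOn
      (fun q : ℝ × ℝ => q.1 • unitDisk.indicator
        (fun w => w ^ m * conj w ^ n * ((1 - ‖w‖ ^ 2 : ℝ) : ℂ) ^ p) (Complex.polarCoord.symm q))
      (fun q => G q.1 * H q.2) polarCoord.target := by
    rintro ⟨r, θ⟩ ⟨hr, -⟩
    simp only [G, H]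
    have hnorm : ‖Complex.polarCoord.symm (r, θ)‖ = r := by
      rw [Complex.norm_polarCoord_symm, abs_of_pos hr]
    by_cases hr1 : r < 1
    · have hmem : Complex.polarCoord.symm (r, θ) ∈ unitDisk := show ‖_‖ < 1 by rwa [hnorm]
      have hmem' : r ∈ Set.Ioo 0 1 := ⟨hr, hr1⟩
      rw [Set.indicator_of_mem hmem, Set.indicator_of_mem hmem',
        pow_mul_conj_pow_polarCoord_symm, hnorm, real_smul]
      push_cast
      ring
    · have hmem : Complex.polarCoord.symm (r, θ) ∉ unitDisk := show ¬‖_‖ < 1 by rwa [hnorm]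
      have hmem' : r ∉ Set.Ioo 0 1 := fun h => hr1 h.2
      rw [Set.indicator_of_notMem hmem, Set.indicator_of_notMem hmem', smul_zero, zero_mul]
  have hG : ∫ r in Set.Ioi 0, G r =
      ((∫ r in (0 : ℝ)..1, r ^ (m + n + 1) * (1 - r ^ 2) ^ p : ℝ) : ℂ) := by
    rw [setIntegral_indicator measurableSet_Ioo,
      Set.inter_eq_right.mpr Set.Ioo_subset_Ioi_self, integral_complex_ofReal,
      intervalIntegral.integral_of_le zero_le_one, integral_Ioc_eq_integral_Ioo]
  rw [← integral_indicator isOpen_unitDisk.measurableSet,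
    ← Complex.integral_comp_polarCoord_symm,
    setIntegral_congr_fun polarCoord.open_target.measurableSet hpolar,
    show polarCoord.target = Set.Ioi 0 ×ˢ Set.Ioo (-Real.pi) Real.pi from rfl,
    Measure.volume_eq_prod, ← Measure.prod_restrict, integral_prod_mul G H, hG,
    integral_exp_int_mul_I]
  simp only [sub_eq_zero, Int.natCast_inj]
  split_ifs with hmn
  · subst hmn
    rw [← two_mul, integral_pow_mul_one_sub_sq_pow]
    push_cast
    ring
  · rw [mul_zero]

lemma Continuous.integrableOn_unitDisk {E : Type*} [NormedAddCommGroup E] {f : ℂ → E}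
    (hf : Continuous f) : IntegrableOn f unitDisk :=
  (hf.continuousOn.integrableOn_compact (isCompact_closedBall 0 1)).mono_set
    fun _ hz => mem_closedBall_zero_iff.mpr (le_of_lt hz)

lemma setIntegral_unitDisk_norm_sum_sq (a : ℕ → ℂ) (N p : ℕ) :
    ∫ w in unitDisk, ‖∑ m ∈ Finset.range N, a m * w ^ m‖ ^ 2 * (1 - ‖w‖ ^ 2) ^ p =
      ∑ m ∈ Finset.range N, ‖a m‖ ^ 2 * (Real.pi * ∫ t in (0 : ℝ)..1, t ^ m * (1 - t) ^ p) := by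
  have hexpand : ∀ w : ℂ, ((‖∑ m ∈ Finset.range N, a m * w ^ m‖ ^ 2 * (1 - ‖w‖ ^ 2) ^ p : ℝ) : ℂ) =
      ∑ m ∈ Finset.range N, ∑ n ∈ Finset.range N,
        a m * conj (a n) * (w ^ m * conj w ^ n * ((1 - ‖w‖ ^ 2 : ℝ) : ℂ) ^ p) := by
    intro w
    rw [ofReal_mul, ofReal_pow, ← mul_conj', map_sum, Finset.sum_mul_sum, Finset.sum_mul]
    refine Finset.sum_congr rfl fun m _ => ?_
    rw [Finset.sum_mul]
    refine Finset.sum_congr rfl fun n _ => ?_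
    rw [map_mul, map_pow, ofReal_pow]
    ring
  have hint : ∀ m n, IntegrableOn
      (fun w => a m * conj (a n) * (w ^ m * conj w ^ n * ((1 - ‖w‖ ^ 2 : ℝ) : ℂ) ^ p)) unitDisk :=
    fun m n => Continuous.integrableOn_unitDisk (by fun_prop)
  apply ofReal_injective
  rw [← integral_complex_ofReal]
  simp_rw [hexpand]
  rw [integral_finsetSum _ fun m _ => integrable_finsetSum _ fun n _ => hint m n, ofReal_sum]
  refine Finset.sum_congr rfl fun m hm => ?_
  rw [integral_finsetSum _ fun n _ => hint m n]
  simp_rw [integral_const_mul, setIntegral_unitDisk_pow_mul_conj_pow, mul_ite, mul_zero,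
    Finset.sum_ite_eq, if_pos hm, mul_conj']
  push_cast
  ring

lemma norm_sub_pow_eq_norm_sum (w v : ℂ) (k : ℕ) :
    ‖w - v‖ ^ k = ‖∑ m ∈ Finset.range (k + 1), (k.choose m * (-v) ^ (k - m)) * w ^ m‖ := by
  rw [← norm_pow, sub_eq_add_neg, add_pow]
  congr 1
  exact Finset.sum_congr rfl fun m _ => by ring

lemma poch_succ_left (a : ℝ) (n : ℕ) : poch a (n + 1) = a * poch (a + 1) n := by
  simp only [poch, Finset.prod_range_succ', Nat.cast_add, Nat.cast_one, Nat.cast_zero, add_zero]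
  ring_nf

theorem moment_integral_eval_general (ν : ℕ) (hν : 2 ≤ ν) (k : ℕ) (v : ℂ) :
    ((ν : ℝ) - 1) *
        ∫ w, ‖v - w‖ ^ (2 * k) * (1 - ‖w‖ ^ 2) ^ ν ∂iota =
      ∑ i ∈ Finset.range (k + 1),
        (k.choose i : ℝ) ^ 2 * ((Nat.factorial i : ℝ) / poch (ν : ℝ) i) *
          ‖v‖ ^ (2 * (k - i)) := by
  obtain ⟨q, rfl⟩ : ∃ q, ν = q + 2 := ⟨ν - 2, by omega⟩
  have hweight : ∀ w ∈ unitDisk, ‖v - w‖ ^ (2 * k) * (1 - ‖w‖ ^ 2) ^ (q + 2) /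
      (Real.pi * (1 - ‖w‖ ^ 2) ^ 2) =
      Real.pi⁻¹ * (‖∑ m ∈ Finset.range (k + 1), (k.choose m * (-v) ^ (k - m)) * w ^ m‖ ^ 2 *
        (1 - ‖w‖ ^ 2) ^ q) := by
    intro w hw
    have hw2 : 1 - ‖w‖ ^ 2 ≠ 0 := (sub_pos.mpr (pow_lt_one₀ (norm_nonneg w) hw two_ne_zero)).ne'
    rw [← norm_sub_pow_eq_norm_sum, norm_sub_rev, pow_mul', pow_add]
    field_simp
  rw [integral_iota_eq_setIntegral, setIntegral_congr_fun isOpen_unitDisk.measurableSet hweight,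
    integral_const_mul, setIntegral_unitDisk_norm_sum_sq, Finset.mul_sum, Finset.mul_sum]
  refine Finset.sum_congr rfl fun m _ => ?_
  rw [integral_pow_mul_one_sub_pow, poch_succ_left, norm_mul, norm_pow, norm_neg,
    Complex.norm_natCast]
  push_cast
  rw [show (q : ℝ) + 1 + 1 = q + 2 by ring]
  field_simp
  ring

/-- For an integer `ν ≥ 2`, `k ∈ ℕ` and `v ∈ 𝔻`,
`(ν−1)·∫_𝔻 |v−w|^{2k}(1−|w|²)^ν dι(w) = ∑_{i=0}^{k} C(k,i)²·(i!/(ν)_i)·|v|^{2(k−i)}`. -/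
theorem moment_integral_eval (ν : ℕ) (hν : 2 ≤ ν) (k : ℕ) (v : ℂ) (hv : v ∈ unitDisk) :
    ((ν : ℝ) - 1) *
        ∫ w, ‖v - w‖ ^ (2 * k) * (1 - ‖w‖ ^ 2) ^ ν ∂iota =
      ∑ i ∈ Finset.range (k + 1),
        (k.choose i : ℝ) ^ 2 * ((Nat.factorial i : ℝ) / poch (ν : ℝ) i) *
          ‖v‖ ^ (2 * (k - i)) :=
  moment_integral_eval_general ν hν k v
end

section
/- Let μ ≥ 0 be a real number, ν > 0 a real number, k ∈ ℕ, and f ∈ L¹(𝔻, dι) (complex-valued). Then ∑_{i=0}^{k} C(k,i)² · (i!/(ν)_i) · ∫_{𝔻} f(v)·|v|^{2(k−i)}·(1−|v|²)^μ dι(v) = ∑_{j=0}^{k} (−1)^j · C(k,j) · ((ν+k−j)_k/(ν)_k) · ∫_{𝔻} f(v)·(1−|v|²)^{μ+j} dι(v), where C(·,·) denotes binomial coefficients. -/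
/-! Put `t = 1 - ‖v‖²`. On the disk, `‖v‖^{2(k-i)} t^μ = (1 - t)^{k-i} t^μ` expands binomially
into `∑ⱼ (-1)ʲ C(k-i,j) t^{μ+j}`; every `t^{μ+j}` is bounded by `1`, so the expansion integrates
term by term against `f dι`. After exchanging the sums, the coefficient of `∫ f t^{μ+j} dι` is
`(-1)ʲ ∑ᵢ C(k,i)² i!/(ν)ᵢ C(k-i,j)`. By `C(k,i) C(k-i,j) = C(k,j) C(k-j,i)` and
`(ν)ₖ = (ν)ᵢ (ν+i)ₖ₋ᵢ` this is `C(k,j)/(ν)ₖ` times `∑ᵢ C(k,i) (k-j)^{(i)} (ν+i)ₖ₋ᵢ`, with `x^{(i)}`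
the falling factorial. As `(a)ₙ = (a+n-1)^{(n)}`, that sum is the Chu–Vandermonde expansion of
the falling factorial `((k-j) + (ν+k-1))^{(k)} = (ν+k-j)ₖ`. -/

open MeasureTheory Complex Filter

open Finset Polynomial

lemma poch_succ (a : ℝ) (n : ℕ) : poch a (n + 1) = poch a n * (a + n) := prod_range_succ _ _

lemma poch_eq_eval_ascPochhammer (a : ℝ) (n : ℕ) : poch a n = (ascPochhammer ℝ n).eval a := by
  induction n with
  | zero => simp [poch]
  | succ n ih => rw [poch_succ, ascPochhammer_succ_eval, ih]

lemma poch_eq_smeval_descPochhammer (a : ℝ) (n : ℕ) :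
    poch a n = (descPochhammer ℤ n).smeval (a + n - 1) := by
  rw [descPochhammer_smeval_eq_ascPochhammer, ascPochhammer_smeval_eq_eval,
    poch_eq_eval_ascPochhammer]
  ring_nf

lemma poch_add (a : ℝ) (m n : ℕ) : poch a (m + n) = poch a m * poch (a + m) n := by
  simp only [poch, prod_range_add, Nat.cast_add, add_assoc]

lemma poch_pos {a : ℝ} (ha : 0 < a) (n : ℕ) : 0 < poch a n :=
  prod_pos fun i _ => by positivity

lemma poch_add_natCast (x : ℝ) (n k : ℕ) :
    poch (x + n) k =
      ∑ i ∈ range (k + 1), (k.choose i * n.descFactorial i : ℝ) * poch (x + i) (k - i) := by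
  rw [poch_eq_smeval_descPochhammer, show x + n + k - 1 = n + (x + k - 1) by ring,
    Ring.descPochhammer_smeval_add _ (Commute.all _ _), Nat.sum_antidiagonal_eq_sum_range_succ
      (fun i j => (k.choose i : ℝ) * ((descPochhammer ℤ i).smeval (n : ℝ) *
        (descPochhammer ℤ j).smeval (x + k - 1)))]
  refine sum_congr rfl fun i hi => ?_
  have hik : i ≤ k := Nat.lt_succ_iff.mp (mem_range.mp hi)
  rw [descPochhammer_smeval_eq_descFactorial, poch_eq_smeval_descPochhammer, Nat.cast_sub hik]
  ring_nf

lemma choose_mul_choose_sub_comm (k i j : ℕ) :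
    k.choose i * (k - i).choose j = k.choose j * (k - j).choose i := by
  have h := Nat.choose_mul (n := k) (Nat.le_add_right i j)
  rw [Nat.choose_symm_add, Nat.choose_mul (Nat.le_add_left j i), Nat.add_sub_cancel_left,
    Nat.add_sub_cancel] at h
  exact h.symm

open Nat in
lemma sum_choose_sq_mul_factorial_div_poch_mul_choose {ν : ℝ} (hν : 0 < ν) {k j : ℕ}
    (hj : j ≤ k) :
    ∑ i ∈ range (k + 1), (k.choose i : ℝ) ^ 2 * (i ! / poch ν i) * ((k - i).choose j : ℝ) =
      k.choose j * (poch (ν + k - j) k / poch ν k) := by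
  have hvandermonde := poch_add_natCast ν (k - j) k
  rw [Nat.cast_sub hj, ← add_sub_assoc] at hvandermonde
  rw [hvandermonde, sum_div, mul_sum]
  refine sum_congr rfl fun i hi => ?_
  have hik : i ≤ k := Nat.lt_succ_iff.mp (mem_range.mp hi)
  have hswap : (k.choose i * (k - i).choose j : ℝ) = k.choose j * (k - j).choose i := by
    exact_mod_cast choose_mul_choose_sub_comm k i j
  rw [← Nat.add_sub_cancel' hik, poch_add, Nat.add_sub_cancel' hik,
    descFactorial_eq_factorial_mul_choose]
  field_simp [(poch_pos hν i).ne', (poch_pos (by positivity : 0 < ν + i) (k - i)).ne']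
  push_cast
  linear_combination (k.choose i * i ! : ℝ) * hswap

lemma one_sub_pow_mul_rpow_eq_sum (μ : ℝ) {m M : ℕ} (hmM : m ≤ M) {t : ℝ} (ht : 0 < t) :
    (1 - t) ^ m * t ^ μ = ∑ j ∈ range (M + 1), (-1) ^ j * m.choose j * t ^ (μ + j) := by
  have hvanish : ∀ j ∈ range (M + 1), j ∉ range (m + 1) →
      (-1) ^ j * m.choose j * t ^ (μ + j) = 0 := fun j _ hj => by
    rw [Nat.choose_eq_zero_of_lt (by simpa using hj), Nat.cast_zero, mul_zero, zero_mul]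
  rw [← sum_subset (range_subset_range.2 (by omega)) hvanish, sub_eq_neg_add, add_pow, sum_mul]
  refine sum_congr rfl fun j _ => ?_
  rw [Real.rpow_add ht, Real.rpow_natCast, one_pow, neg_pow]
  ring

lemma ae_mem_unitDisk : ∀ᵐ v ∂iota, v ∈ unitDisk :=
  (withDensity_absolutelyContinuous _ _).ae_le
    (ae_restrict_mem (measurableSet_lt measurable_norm measurable_const))

lemma integrable_mul_one_sub_norm_sq_rpow {f : ℂ → ℂ} (hf : Integrable f iota) {p : ℝ}
    (hp : 0 ≤ p) : Integrable (fun v => f v * (((1 - ‖v‖ ^ 2) ^ p : ℝ) : ℂ)) iota := by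
  refine hf.mul_bdd (c := 1) (by fun_prop) ?_
  filter_upwards [ae_mem_unitDisk] with v hv
  have hv : ‖v‖ < 1 := hv
  have hpos : 0 ≤ 1 - ‖v‖ ^ 2 := by nlinarith [norm_nonneg v]
  rw [Complex.norm_real, Real.norm_of_nonneg (Real.rpow_nonneg hpos p)]
  exact Real.rpow_le_one hpos (by nlinarith [norm_nonneg v]) hp

lemma integral_mul_norm_sq_pow_mul_rpow {f : ℂ → ℂ} (hf : Integrable f iota) {μ : ℝ}
    (hμ : 0 ≤ μ) {m M : ℕ} (hmM : m ≤ M) :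
    ∫ v, f v * ((‖v‖ ^ (2 * m) * (1 - ‖v‖ ^ 2) ^ μ : ℝ) : ℂ) ∂iota =
      ∑ j ∈ range (M + 1), ((-1) ^ j * m.choose j : ℂ) *
        ∫ v, f v * (((1 - ‖v‖ ^ 2) ^ (μ + j) : ℝ) : ℂ) ∂iota := by
  have hexpand : ∀ᵐ v ∂iota, f v * ((‖v‖ ^ (2 * m) * (1 - ‖v‖ ^ 2) ^ μ : ℝ) : ℂ) =
      ∑ j ∈ range (M + 1), ((-1) ^ j * m.choose j : ℂ) *
        (f v * (((1 - ‖v‖ ^ 2) ^ (μ + j) : ℝ) : ℂ)) := by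
    filter_upwards [ae_mem_unitDisk] with v hv
    have hv : ‖v‖ < 1 := hv
    have hpos : 0 < 1 - ‖v‖ ^ 2 := by nlinarith [norm_nonneg v]
    rw [pow_mul]
    nth_rw 1 [← sub_sub_cancel 1 (‖v‖ ^ 2)]
    rw [one_sub_pow_mul_rpow_eq_sum μ hmM hpos, Complex.ofReal_sum, mul_sum]
    refine sum_congr rfl fun j _ => ?_
    push_cast
    ring
  rw [integral_congr_ae hexpand, integral_finsetSum _ fun j _ =>
    (integrable_mul_one_sub_norm_sq_rpow hf (by positivity)).const_mul _]
  simp_rw [integral_const_mul]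

/-- For real `μ ≥ 0`, `ν > 0`, `k ∈ ℕ` and `f ∈ L¹(𝔻, dι)`,
`∑_{i=0}^{k} C(k,i)²·(i!/(ν)_i)·∫_𝔻 f(v)|v|^{2(k−i)}(1−|v|²)^μ dι(v)
  = ∑_{j=0}^{k} (−1)^j·C(k,j)·((ν+k−j)_k/(ν)_k)·∫_𝔻 f(v)(1−|v|²)^{μ+j} dι(v)`. -/
theorem berezin_expansion_identity (μ ν : ℝ) (hμ : 0 ≤ μ) (hν : 0 < ν) (k : ℕ)
    (f : ℂ → ℂ) (hf : Integrable f iota) :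
    ∑ i ∈ Finset.range (k + 1),
        (((k.choose i : ℝ) ^ 2 * ((Nat.factorial i : ℝ) / poch ν i) : ℝ) : ℂ) *
          ∫ v, f v * ((‖v‖ ^ (2 * (k - i)) *
            (1 - ‖v‖ ^ 2) ^ μ : ℝ) : ℂ) ∂iota =
      ∑ j ∈ Finset.range (k + 1),
        (-1 : ℂ) ^ j * (k.choose j : ℂ) *
          (((poch (ν + (k : ℝ) - (j : ℝ)) k / poch ν k : ℝ)) : ℂ) *
          ∫ v, f v * (((1 - ‖v‖ ^ 2) ^ (μ + (j : ℝ)) : ℝ) : ℂ) ∂iota := by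
  set B : ℕ → ℂ := fun j => ∫ v, f v * (((1 - ‖v‖ ^ 2) ^ (μ + (j : ℝ)) : ℝ) : ℂ) ∂iota
  rw [sum_congr rfl fun i _ =>
    congrArg _ (integral_mul_norm_sq_pow_mul_rpow hf hμ (Nat.sub_le k i))]
  simp_rw [mul_sum]
  rw [sum_comm]
  refine sum_congr rfl fun j hj => ?_
  have hcoeff :=
    sum_choose_sq_mul_factorial_div_poch_mul_choose hν (Nat.lt_succ_iff.mp (mem_range.mp hj))
  calc _ = (-1) ^ j * ((∑ i ∈ range (k + 1), (k.choose i : ℝ) ^ 2 * (i.factorial / poch ν i) *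
        ((k - i).choose j : ℝ) : ℝ) : ℂ) * B j := by
        push_cast
        rw [mul_sum, sum_mul]
        exact sum_congr rfl fun i _ => by ring
    _ = _ := by
        rw [hcoeff]
        push_cast
        ring
end
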